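/- arXiv:1512.04416 — 4 statements merged into one kernel-verified Lean document; each statement's English description precedes it below -/
import Mathlib

section
/- The function h is coercive (radially unbounded): for every C ∈ ℝ there exists R > 0 such that for all (α1, α2) ∈ ℝ² with √(α1² + α2²) > R one has h(α1, α2) > C; equivalently, h(α1, α2) tends to +∞ as ‖(α1, α2)‖ tends to +∞. (Proposition 1 of the paper; it requires that (v1, v2) ≠ (0, 0).) -/
/-!
Write `Q x = xᵀ S⁻¹ x`. By Cauchy–Schwarz for the positive semidefinite form `xᵀ S⁻¹ y`,
`h ≥ 1 + Q (z1 - m1) + Q (z2 - m2)`, and `Q m ≤ 2 Q (z - m) + 2 Q z`. The pair `(m1, m2)` is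
`(v1, v2)` multiplied by the complex number `α1 + i α2`, so by symmetry of the form
`Q m1 + Q m2 = (α1² + α2²) (Q v1 + Q v2)`. Hence `h` grows at least like
`(α1² + α2²) (Q v1 + Q v2) / 2`, and `Q v1 + Q v2 > 0` since `(v1, v2) ≠ (0, 0)`.
-/

open Matrix

/-- The objective function `h(α1, α2)` from the paper. -/
noncomputable def hfun {N : ℕ} (S : Matrix (Fin N) (Fin N) ℝ) (z1 z2 v1 v2 : Fin N → ℝ)
    (α1 α2 : ℝ) : ℝ :=
  (1 + (z1 - (α1 • v1 - α2 • v2)) ⬝ᵥ (S⁻¹ *ᵥ (z1 - (α1 • v1 - α2 • v2)))) *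
  (1 + (z2 - (α1 • v2 + α2 • v1)) ⬝ᵥ (S⁻¹ *ᵥ (z2 - (α1 • v2 + α2 • v1)))) -
  ((z1 - (α1 • v1 - α2 • v2)) ⬝ᵥ (S⁻¹ *ᵥ (z2 - (α1 • v2 + α2 • v1)))) ^ 2

namespace LinearMap.BilinForm

variable {R M : Type*} [CommRing R] [AddCommGroup M] [Module R M] {B : LinearMap.BilinForm R M}

lemma IsSymm.apply_rotate_add_apply_rotate (hB : B.IsSymm) (a b : R) (x y : M) :
    B (a • x - b • y) (a • x - b • y) + B (a • y + b • x) (a • y + b • x) =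
      (a ^ 2 + b ^ 2) * (B x x + B y y) := by
  simp only [map_sub, map_add, map_smul, LinearMap.sub_apply, LinearMap.add_apply,
    LinearMap.smul_apply, smul_eq_mul, hB.eq y x]
  ring

variable [LinearOrder R] [IsStrictOrderedRing R]

lemma IsNonneg.apply_le_two_mul_apply_sub_add (hB : B.IsNonneg) (x y : M) :
    B x x ≤ 2 * (B (y - x) (y - x) + B y y) := by
  have := hB.nonneg (x - (2 : R) • y)
  simp only [map_sub, map_smul, LinearMap.sub_apply, LinearMap.smul_apply, smul_eq_mul] at this ⊢
  linarith

lemma IsPosSemidef.one_add_add_le_one_add_mul_one_add_sub_sq (hB : B.IsPosSemidef) (x y : M) :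
    1 + B x x + B y y ≤ (1 + B x x) * (1 + B y y) - B x y ^ 2 := by
  nlinarith [B.apply_sq_le_of_symm hB.nonneg (isSymm_iff.mp hB.isSymm) x y,
    hB.nonneg x, hB.nonneg y]

end LinearMap.BilinForm

lemma Matrix.PosSemidef.isPosSemidef_toBilin' {n : Type*} [Fintype n] [DecidableEq n]
    {M : Matrix n n ℝ} (hM : M.PosSemidef) : M.toBilin'.IsPosSemidef :=
  ⟨isSymm_toBilin'_iff_isSymm.mpr (isHermitian_iff_isSymm.mp hM.isHermitian),
    ⟨fun x => by simpa [toBilin'_apply'] using hM.dotProduct_mulVec_nonneg x⟩⟩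

lemma exists_radius_of_le_add_mul_sq {f : ℝ → ℝ → ℝ} {A κ : ℝ} (hκ : 0 < κ)
    (hf : ∀ α1 α2, A + κ * (α1 ^ 2 + α2 ^ 2) ≤ f α1 α2) (C : ℝ) :
    ∃ R : ℝ, 0 < R ∧ ∀ α1 α2 : ℝ, Real.sqrt (α1 ^ 2 + α2 ^ 2) > R → f α1 α2 > C := by
  refine ⟨max 1 ((C - A) / κ), by positivity, fun α1 α2 hr => ?_⟩
  set r := Real.sqrt (α1 ^ 2 + α2 ^ 2)
  have hr1 : 1 < r := lt_of_le_of_lt (le_max_left _ _) hr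
  have hrC : C - A < κ * r := (div_lt_iff₀' hκ).mp (lt_of_le_of_lt (le_max_right _ _) hr)
  have hr2 : r ^ 2 = α1 ^ 2 + α2 ^ 2 := Real.sq_sqrt (by positivity)
  have hrr : κ * r < κ * (α1 ^ 2 + α2 ^ 2) := hr2 ▸ mul_lt_mul_of_pos_left (by nlinarith) hκ
  linarith [hf α1 α2]

theorem hfun_coercive_general {N : ℕ}
    (S : Matrix (Fin N) (Fin N) ℝ) (hS : S.PosDef)
    (z1 z2 v1 v2 : Fin N → ℝ) (hv : (v1, v2) ≠ (0, 0)) :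
    ∀ C : ℝ, ∃ R : ℝ, 0 < R ∧ ∀ α1 α2 : ℝ,
      Real.sqrt (α1 ^ 2 + α2 ^ 2) > R → hfun S z1 z2 v1 v2 α1 α2 > C := by
  have hS' : (S⁻¹).PosDef := hS.inv
  set B := (S⁻¹).toBilin'
  have hB : ∀ x y, B x y = x ⬝ᵥ (S⁻¹ *ᵥ y) := (S⁻¹).toBilin'_apply'
  have hBpsd : B.IsPosSemidef := hS'.posSemidef.isPosSemidef_toBilin'
  have hκ : 0 < B v1 v1 + B v2 v2 := by
    have hpos : ∀ x, x ≠ 0 → 0 < B x x := fun x hx => by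
      simpa [hB] using hS'.dotProduct_mulVec_pos hx
    have hv' : v1 ≠ 0 ∨ v2 ≠ 0 := by
      contrapose! hv
      rw [hv.1, hv.2]
    rcases hv' with h | h
    · linarith [hpos v1 h, hBpsd.nonneg v2]
    · linarith [hpos v2 h, hBpsd.nonneg v1]
  refine exists_radius_of_le_add_mul_sq (A := 1 - (B z1 z1 + B z2 z2)) (half_pos hκ)
    fun α1 α2 => ?_
  have hrot := hBpsd.isSymm.apply_rotate_add_apply_rotate α1 α2 v1 v2
  set m1 := α1 • v1 - α2 • v2
  set m2 := α1 • v2 + α2 • v1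
  have hfun_eq : hfun S z1 z2 v1 v2 α1 α2 =
      (1 + B (z1 - m1) (z1 - m1)) * (1 + B (z2 - m2) (z2 - m2)) - B (z1 - m1) (z2 - m2) ^ 2 := by
    simp only [hB]; rfl
  have hcs := hBpsd.one_add_add_le_one_add_mul_one_add_sub_sq (z1 - m1) (z2 - m2)
  have hm1 := hBpsd.isNonneg.apply_le_two_mul_apply_sub_add m1 z1
  have hm2 := hBpsd.isNonneg.apply_le_two_mul_apply_sub_add m2 z2
  linarith

/-- Proposition 1: `h` is coercive (radially unbounded). -/
theorem hfun_coercive {N : ℕ} (hN : 1 ≤ N)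
    (S : Matrix (Fin N) (Fin N) ℝ) (hS : S.PosDef)
    (z1 z2 v1 v2 : Fin N → ℝ) (hv : (v1, v2) ≠ (0, 0)) :
    ∀ C : ℝ, ∃ R : ℝ, 0 < R ∧ ∀ α1 α2 : ℝ,
      Real.sqrt (α1 ^ 2 + α2 ^ 2) > R → hfun S z1 z2 v1 v2 α1 α2 > C :=
  hfun_coercive_general S hS z1 z2 v1 v2 hv
end

section
/- For every (α1, α2) ∈ ℝ², h(α1, α2) > x(α1) + y(α2), where x(α1) = α1²·(v1ᵀ S⁻¹ v1 + v2ᵀ S⁻¹ v2) − 2α1·(z1ᵀ S⁻¹ v1 + z2ᵀ S⁻¹ v2) and y(α2) = α2²·(v1ᵀ S⁻¹ v1 + v2ᵀ S⁻¹ v2) + 2α2·(z1ᵀ S⁻¹ v2 − z2ᵀ S⁻¹ v1). -/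
open Matrix

lemma sym_dot {N : ℕ} {Q : Matrix (Fin N) (Fin N) ℝ} (hQ : Q.IsHermitian)
    (x y : Fin N → ℝ) : x ⬝ᵥ (Q *ᵥ y) = y ⬝ᵥ (Q *ᵥ x) := by
  rw [dotProduct_mulVec, ← mulVec_transpose]
  have hQt : Qᵀ = Q := hQ
  rw [hQt, dotProduct_comm]

lemma cs_dot {N : ℕ} {Q : Matrix (Fin N) (Fin N) ℝ} (hQ : Q.PosSemidef)
    (a b : Fin N → ℝ) :
    (a ⬝ᵥ (Q *ᵥ b)) ^ 2 ≤ (a ⬝ᵥ (Q *ᵥ a)) * (b ⬝ᵥ (Q *ᵥ b)) := by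
  have hsym := sym_dot hQ.1
  have key : ∀ t : ℝ, 0 ≤ (b ⬝ᵥ (Q *ᵥ b)) * (t * t) + (2 * (a ⬝ᵥ (Q *ᵥ b))) * t
      + (a ⬝ᵥ (Q *ᵥ a)) := by
    intro t
    have h0 := hQ.re_dotProduct_nonneg (a + t • b)
    simp only [RCLike.re_to_real, star_trivial, dotProduct_add, add_dotProduct,
      mulVec_add, mulVec_smul, dotProduct_smul, smul_dotProduct, smul_eq_mul] at h0
    rw [hsym b a] at h0
    nlinarith [h0]
  have hd := discrim_le_zero key
  rw [discrim] at hd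
  nlinarith [hd]

/-- `h(α1, α2) > x(α1) + y(α2)` where `x` and `y` are the quadratics from the paper. -/
theorem hfun_gt_quadratic_lower_bound {N : ℕ} (hN : 1 ≤ N)
    (S : Matrix (Fin N) (Fin N) ℝ) (hS : S.PosDef)
    (z1 z2 v1 v2 : Fin N → ℝ) :
    ∀ α1 α2 : ℝ,
      hfun S z1 z2 v1 v2 α1 α2 >
        (α1 ^ 2 * (v1 ⬝ᵥ (S⁻¹ *ᵥ v1) + v2 ⬝ᵥ (S⁻¹ *ᵥ v2)) -
            2 * α1 * (z1 ⬝ᵥ (S⁻¹ *ᵥ v1) + z2 ⬝ᵥ (S⁻¹ *ᵥ v2))) +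
        (α2 ^ 2 * (v1 ⬝ᵥ (S⁻¹ *ᵥ v1) + v2 ⬝ᵥ (S⁻¹ *ᵥ v2)) +
            2 * α2 * (z1 ⬝ᵥ (S⁻¹ *ᵥ v2) - z2 ⬝ᵥ (S⁻¹ *ᵥ v1))) := by
  intro α1 α2
  have hQ : (S⁻¹).PosDef := hS.inv
  have hQs := hQ.posSemidef
  have hsym := sym_dot hQs.1
  set Q := S⁻¹ with hQdef
  set a : Fin N → ℝ := z1 - (α1 • v1 - α2 • v2) with ha
  set b : Fin N → ℝ := z2 - (α1 • v2 + α2 • v1) with hb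
  have hCS := cs_dot hQs a b
  have hpa : (0:ℝ) ≤ a ⬝ᵥ (Q *ᵥ a) := by simpa using hQs.re_dotProduct_nonneg a
  have hpb : (0:ℝ) ≤ b ⬝ᵥ (Q *ᵥ b) := by simpa using hQs.re_dotProduct_nonneg b
  have hz1 : (0:ℝ) ≤ z1 ⬝ᵥ (Q *ᵥ z1) := by simpa using hQs.re_dotProduct_nonneg z1
  have hz2 : (0:ℝ) ≤ z2 ⬝ᵥ (Q *ᵥ z2) := by simpa using hQs.re_dotProduct_nonneg z2
  have hexp : a ⬝ᵥ (Q *ᵥ a) + b ⬝ᵥ (Q *ᵥ b)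
      = z1 ⬝ᵥ (Q *ᵥ z1) + z2 ⬝ᵥ (Q *ᵥ z2)
        + ((α1 ^ 2 * (v1 ⬝ᵥ (Q *ᵥ v1) + v2 ⬝ᵥ (Q *ᵥ v2)) -
            2 * α1 * (z1 ⬝ᵥ (Q *ᵥ v1) + z2 ⬝ᵥ (Q *ᵥ v2))) +
          (α2 ^ 2 * (v1 ⬝ᵥ (Q *ᵥ v1) + v2 ⬝ᵥ (Q *ᵥ v2)) +
            2 * α2 * (z1 ⬝ᵥ (Q *ᵥ v2) - z2 ⬝ᵥ (Q *ᵥ v1)))) := by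
    rw [ha, hb]
    simp only [dotProduct_sub, sub_dotProduct, dotProduct_add, add_dotProduct,
      mulVec_sub, mulVec_add, mulVec_smul, dotProduct_smul, smul_dotProduct,
      smul_eq_mul]
    rw [hsym v1 z1, hsym v2 z1, hsym v1 z2, hsym v2 z2, hsym v2 v1]
    ring
  rw [hfun]
  nlinarith [hCS, hpa, hpb, hz1, hz2, hexp]
end

section
/- The maximum over (α1, α2) ∈ ℝ² of ℓ(α1, α2) + (1/2)·(z1ᵀ M⁻¹ z1 + z2ᵀ M⁻¹ z2) equals (1/2)·[ (v1ᵀ M⁻¹ z1 + v2ᵀ M⁻¹ z2)² + (v1ᵀ M⁻¹ z2 − v2ᵀ M⁻¹ z1)² ] / (v1ᵀ M⁻¹ v1 + v2ᵀ M⁻¹ v2), where ℓ(α1, α2) = −(1/2)·[ (z1 − m1(α1,α2))ᵀ M⁻¹ (z1 − m1(α1,α2)) + (z2 − m2(α1,α2))ᵀ M⁻¹ (z2 − m2(α1,α2)) ]. -/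
open Matrix

/-- The (compressed) log-likelihood `ℓ(α1, α2)` for known covariance `M`. -/
noncomputable def ell {N : ℕ} (M : Matrix (Fin N) (Fin N) ℝ) (z1 z2 v1 v2 : Fin N → ℝ)
    (α1 α2 : ℝ) : ℝ :=
  -(1/2) * ((z1 - (α1 • v1 - α2 • v2)) ⬝ᵥ (M⁻¹ *ᵥ (z1 - (α1 • v1 - α2 • v2))) +
            (z2 - (α1 • v2 + α2 • v1)) ⬝ᵥ (M⁻¹ *ᵥ (z2 - (α1 • v2 + α2 • v1))))

/-!
Expanding the two quadratic forms, `ℓ(α1, α2) + ½(z1ᵀM⁻¹z1 + z2ᵀM⁻¹z2)` is the concave quadratic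
`α1 p + α2 q - ½ (α1² + α2²) a` with `p = v1ᵀM⁻¹z1 + v2ᵀM⁻¹z2`, `q = v1ᵀM⁻¹z2 - v2ᵀM⁻¹z1` and
`a = v1ᵀM⁻¹v1 + v2ᵀM⁻¹v2 > 0`. Completing the square, its maximum `(p² + q²) / (2a)` is attained
at `(α1, α2) = (p / a, q / a)`.
-/

theorem isGreatest_range_linear_sub_half_sq_mul {p q a : ℝ} (ha : 0 < a) :
    IsGreatest (Set.range fun α : ℝ × ℝ => α.1 * p + α.2 * q - (1/2) * (α.1 ^ 2 + α.2 ^ 2) * a)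
      ((1/2) * (p ^ 2 + q ^ 2) / a) := by
  refine ⟨⟨(p / a, q / a), by field_simp; ring⟩, ?_⟩
  rintro _ ⟨⟨α1, α2⟩, rfl⟩
  rw [le_div_iff₀ ha]
  nlinarith [sq_nonneg (α1 * a - p), sq_nonneg (α2 * a - q)]

theorem Matrix.IsSymm.dotProduct_mulVec_comm {n R : Type*} [Fintype n] [CommSemiring R]
    {W : Matrix n n R} (hW : W.IsSymm) (x y : n → R) :
    x ⬝ᵥ (W *ᵥ y) = y ⬝ᵥ (W *ᵥ x) := by
  rw [dotProduct_mulVec, ← mulVec_transpose, hW.eq, dotProduct_comm]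

theorem Matrix.PosDef.dotProduct_mulVec_add_pos {n : Type*} [Fintype n] {W : Matrix n n ℝ}
    (hW : W.PosDef) {v1 v2 : n → ℝ} (hv : (v1, v2) ≠ (0, 0)) :
    0 < v1 ⬝ᵥ (W *ᵥ v1) + v2 ⬝ᵥ (W *ᵥ v2) := by
  have nonneg (x : n → ℝ) : 0 ≤ x ⬝ᵥ (W *ᵥ x) := by
    simpa using hW.posSemidef.dotProduct_mulVec_nonneg x
  have pos {x : n → ℝ} (hx : x ≠ 0) : 0 < x ⬝ᵥ (W *ᵥ x) := by
    simpa using hW.dotProduct_mulVec_pos hx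
  by_cases h1 : v1 = 0
  · have h2 : v2 ≠ 0 := fun h2 => hv (by rw [h1, h2])
    linarith [nonneg v1, pos h2]
  · linarith [pos h1, nonneg v2]

theorem ell_add_half_eq {N : ℕ} {M : Matrix (Fin N) (Fin N) ℝ} (hM : M.IsSymm)
    (z1 z2 v1 v2 : Fin N → ℝ) (α1 α2 : ℝ) :
    ell M z1 z2 v1 v2 α1 α2 + (1/2) * (z1 ⬝ᵥ (M⁻¹ *ᵥ z1) + z2 ⬝ᵥ (M⁻¹ *ᵥ z2)) =
      α1 * (v1 ⬝ᵥ (M⁻¹ *ᵥ z1) + v2 ⬝ᵥ (M⁻¹ *ᵥ z2)) +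
        α2 * (v1 ⬝ᵥ (M⁻¹ *ᵥ z2) - v2 ⬝ᵥ (M⁻¹ *ᵥ z1)) -
        (1/2) * (α1 ^ 2 + α2 ^ 2) * (v1 ⬝ᵥ (M⁻¹ *ᵥ v1) + v2 ⬝ᵥ (M⁻¹ *ᵥ v2)) := by
  have comm := hM.inv.dotProduct_mulVec_comm
  simp only [ell, dotProduct_sub, sub_dotProduct, dotProduct_add, add_dotProduct, mulVec_sub,
    mulVec_add, mulVec_smul, dotProduct_smul, smul_dotProduct, smul_eq_mul]
  linear_combination (α1 / 2) * comm z1 v1 - (α2 / 2) * comm z1 v2 +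
    (α1 / 2) * comm z2 v2 + (α2 / 2) * comm z2 v1

theorem ell_max_value_general {N : ℕ}
    (M : Matrix (Fin N) (Fin N) ℝ) (hM : M.PosDef)
    (z1 z2 v1 v2 : Fin N → ℝ) (hv : (v1, v2) ≠ (0, 0)) :
    IsGreatest
      (Set.range (fun p : ℝ × ℝ =>
        ell M z1 z2 v1 v2 p.1 p.2 + (1/2) * (z1 ⬝ᵥ (M⁻¹ *ᵥ z1) + z2 ⬝ᵥ (M⁻¹ *ᵥ z2))))
      ((1/2) * ((v1 ⬝ᵥ (M⁻¹ *ᵥ z1) + v2 ⬝ᵥ (M⁻¹ *ᵥ z2)) ^ 2 +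
          (v1 ⬝ᵥ (M⁻¹ *ᵥ z2) - v2 ⬝ᵥ (M⁻¹ *ᵥ z1)) ^ 2) /
        (v1 ⬝ᵥ (M⁻¹ *ᵥ v1) + v2 ⬝ᵥ (M⁻¹ *ᵥ v2))) := by
  have hsymm : M.IsSymm := isHermitian_iff_isSymm.mp hM.isHermitian
  simp only [ell_add_half_eq hsymm]
  exact isGreatest_range_linear_sub_half_sq_mul (hM.inv.dotProduct_mulVec_add_pos hv)

/-- The maximum over `(α1, α2)` of `ℓ(α1, α2) + (1/2)(z1ᵀM⁻¹z1 + z2ᵀM⁻¹z2)` equals the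
closed-form expression (A.9). -/
theorem ell_max_value {N : ℕ} (hN : 1 ≤ N)
    (M : Matrix (Fin N) (Fin N) ℝ) (hM : M.PosDef)
    (z1 z2 v1 v2 : Fin N → ℝ) (hv : (v1, v2) ≠ (0, 0)) :
    IsGreatest
      (Set.range (fun p : ℝ × ℝ =>
        ell M z1 z2 v1 v2 p.1 p.2 + (1/2) * (z1 ⬝ᵥ (M⁻¹ *ᵥ z1) + z2 ⬝ᵥ (M⁻¹ *ᵥ z2))))
      ((1/2) * ((v1 ⬝ᵥ (M⁻¹ *ᵥ z1) + v2 ⬝ᵥ (M⁻¹ *ᵥ z2)) ^ 2 +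
          (v1 ⬝ᵥ (M⁻¹ *ᵥ z2) - v2 ⬝ᵥ (M⁻¹ *ᵥ z1)) ^ 2) /
        (v1 ⬝ᵥ (M⁻¹ *ᵥ v1) + v2 ⬝ᵥ (M⁻¹ *ᵥ v2))) :=
  ell_max_value_general M hM z1 z2 v1 v2 hv
end

section
/- Let T be an N×N real symmetric positive definite matrix and let c > 0 be a real number. Then the supremum over all N×N real symmetric positive definite matrices M of det(M)^(−c) · exp(−(1/2)·Tr(M⁻¹ T)) equals (2c)^(cN) · det(T)^(−c) · e^(−cN); in particular this supremum is proportional to det(T)^(−c). -/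
open Matrix

/-!
Both sides scale like `det T ^ (-c)`: factoring `T = Bᴴ B`, the matrix `M⁻¹ T` is similar to the
positive definite `A = B M⁻¹ Bᴴ` with `det A = det T / det M`, so the objective at `M` is
`det T ^ (-c)` times `det A ^ c · exp (-a tr A)` (here `a = 1/2`). In the eigenvalues `λᵢ` of `A`
the latter is `∏ λᵢ ^ c · exp (-a λᵢ)`, and each factor is at most `(c / a) ^ c · exp (-c)` by
`log y ≤ y - 1` at `y = a λᵢ / c`, with equality at `λᵢ = c / a`, i.e. at `M = (a / c) • T`.
-/

theorem Real.rpow_mul_exp_neg_mul_le {a c x : ℝ} (ha : 0 < a) (hc : 0 < c) (hx : 0 < x) :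
    x ^ c * Real.exp (-a * x) ≤ (c / a) ^ c * Real.exp (-c) := by
  have hca : 0 < c / a := div_pos hc ha
  have hlog : Real.log x - Real.log (c / a) ≤ a * x / c - 1 := by
    rw [← Real.log_div hx.ne' hca.ne']
    convert Real.log_le_sub_one_of_pos (div_pos hx hca) using 2
    field_simp
  have hexponent : c * Real.log x + -a * x ≤ c * Real.log (c / a) + -c := by
    have := mul_le_mul_of_nonneg_left hlog hc.le
    rw [mul_sub, mul_sub, mul_div_cancel₀ _ hc.ne', mul_one] at this
    linarith
  calc x ^ c * Real.exp (-a * x) = Real.exp (c * Real.log x + -a * x) := by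
        rw [Real.exp_add, Real.rpow_def_of_pos hx, mul_comm (Real.log x)]
    _ ≤ Real.exp (c * Real.log (c / a) + -c) := Real.exp_le_exp.2 hexponent
    _ = (c / a) ^ c * Real.exp (-c) := by
        rw [Real.exp_add, Real.rpow_def_of_pos hca, mul_comm (Real.log _)]

namespace Matrix.PosDef

variable {n : Type*} [Fintype n] [DecidableEq n]

theorem det_rpow_mul_exp_neg_mul_trace_le {A : Matrix n n ℝ} (hA : A.PosDef) {a c : ℝ}
    (ha : 0 < a) (hc : 0 < c) :
    A.det ^ c * Real.exp (-a * A.trace) ≤ ((c / a) ^ c * Real.exp (-c)) ^ Fintype.card n := by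
  have hpos := hA.eigenvalues_pos
  have hdet : A.det ^ c = ∏ i, hA.1.eigenvalues i ^ c := by
    simp only [hA.1.det_eq_prod_eigenvalues, RCLike.ofReal_real_eq_id, id_eq]
    exact (Real.finsetProd_rpow _ _ (fun i _ ↦ (hpos i).le) c).symm
  have hexp : Real.exp (-a * A.trace) = ∏ i, Real.exp (-a * hA.1.eigenvalues i) := by
    rw [hA.1.trace_eq_sum_eigenvalues, ← Real.exp_sum, ← Finset.mul_sum]
    simp
  rw [hdet, hexp, ← Finset.prod_mul_distrib, ← Finset.card_univ, ← Finset.prod_const]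
  exact Finset.prod_le_prod
    (fun i _ ↦ mul_nonneg (Real.rpow_nonneg (hpos i).le c) (Real.exp_nonneg _))
    fun i _ ↦ Real.rpow_mul_exp_neg_mul_le ha hc (hpos i)

open scoped MatrixOrder in
theorem exists_posDef_det_trace_inv_mul {T M : Matrix n n ℝ} (hT : T.PosDef) (hM : M.PosDef) :
    ∃ A : Matrix n n ℝ, A.PosDef ∧ A.det = T.det / M.det ∧ A.trace = (M⁻¹ * T).trace := by
  obtain ⟨B, rfl⟩ := CStarAlgebra.nonneg_iff_eq_star_mul_self.mp hT.posSemidef.nonneg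
  rw [star_eq_conjTranspose] at hT ⊢
  have hB : IsUnit B := by
    simpa [isUnit_iff_isUnit_det, det_mul, det_conjTranspose] using hT.isUnit
  refine ⟨B * M⁻¹ * Bᴴ, hM.inv.mul_mul_conjTranspose_same (vecMul_injective_iff_isUnit.2 hB),
    ?_, ?_⟩
  · rw [det_mul, det_mul, det_mul, det_nonsing_inv, Ring.inverse_eq_inv', det_conjTranspose,
      star_trivial, div_eq_mul_inv]
    ring
  · rw [trace_mul_cycle, trace_mul_comm]

theorem det_rpow_neg_mul_exp_neg_mul_trace_inv_mul_le {T M : Matrix n n ℝ} (hT : T.PosDef)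
    (hM : M.PosDef) {a c : ℝ} (ha : 0 < a) (hc : 0 < c) :
    M.det ^ (-c) * Real.exp (-a * (M⁻¹ * T).trace) ≤
      T.det ^ (-c) * ((c / a) ^ c * Real.exp (-c)) ^ Fintype.card n := by
  obtain ⟨A, hA, hdet, htrace⟩ := exists_posDef_det_trace_inv_mul hT hM
  have hMdet : M.det ^ (-c) = T.det ^ (-c) * A.det ^ c := by
    rw [show M.det = T.det / A.det by rw [hdet, div_div_cancel₀ hT.det_pos.ne'],
      Real.div_rpow hT.det_pos.le hA.det_pos.le, Real.rpow_neg hA.det_pos.le, div_inv_eq_mul]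
  rw [hMdet, ← htrace, mul_assoc]
  exact mul_le_mul_of_nonneg_left (hA.det_rpow_mul_exp_neg_mul_trace_le ha hc)
    (Real.rpow_nonneg hT.det_pos.le _)

theorem det_rpow_neg_mul_exp_neg_mul_trace_inv_mul_smul {T : Matrix n n ℝ} (hT : T.PosDef)
    {a c : ℝ} (ha : 0 < a) (hc : 0 < c) :
    ((a / c) • T).det ^ (-c) * Real.exp (-a * (((a / c) • T)⁻¹ * T).trace) =
      T.det ^ (-c) * ((c / a) ^ c * Real.exp (-c)) ^ Fintype.card n := by
  have hac : 0 < a / c := div_pos ha hc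
  have hTunit : IsUnit T.det := hT.det_pos.ne'.isUnit
  have hinv : ((a / c) • T)⁻¹ = (c / a) • T⁻¹ := inv_eq_left_inv <| by
    rw [smul_mul_smul_comm, nonsing_inv_mul _ hTunit, show c / a * (a / c) = 1 by field_simp,
      one_smul]
  have hdet : ((a / c) • T).det ^ (-c) = ((c / a) ^ c) ^ Fintype.card n * T.det ^ (-c) := by
    rw [det_smul, Real.mul_rpow (by positivity) hT.det_pos.le, ← Real.rpow_natCast,
      ← Real.rpow_natCast, ← Real.rpow_mul hac.le, ← Real.rpow_mul (div_pos hc ha).le,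
      ← inv_div, Real.inv_rpow (div_pos hc ha).le, ← Real.rpow_neg (div_pos hc ha).le]
    ring_nf
  have htrace : -a * (((a / c) • T)⁻¹ * T).trace = Fintype.card n * -c := by
    rw [hinv, smul_mul, nonsing_inv_mul _ hTunit, trace_smul, trace_one, smul_eq_mul]
    field_simp
  rw [hdet, htrace, Real.exp_nat_mul, mul_pow]
  ring

end Matrix.PosDef

/-- The supremum over positive definite `M` of `det(M)^(-c)·exp(-(1/2)Tr(M⁻¹T))`
equals `(2c)^(cN)·det(T)^(-c)·e^(-cN)`. -/
theorem covariance_ml_sup_value {N : ℕ}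
    (T : Matrix (Fin N) (Fin N) ℝ) (hT : T.PosDef) (c : ℝ) (hc : 0 < c) :
    sSup {x : ℝ | ∃ M : Matrix (Fin N) (Fin N) ℝ, M.PosDef ∧
        x = M.det ^ (-c) * Real.exp (-(1/2) * (M⁻¹ * T).trace)} =
      (2*c) ^ (c * (N : ℝ)) * T.det ^ (-c) * Real.exp (-(c * (N : ℝ))) := by
  have ha : (0 : ℝ) < 1 / 2 := by norm_num
  have hmax : T.det ^ (-c) * ((c / (1 / 2)) ^ c * Real.exp (-c)) ^ Fintype.card (Fin N) =
      (2*c) ^ (c * (N : ℝ)) * T.det ^ (-c) * Real.exp (-(c * (N : ℝ))) := by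
    rw [Fintype.card_fin, mul_pow, ← Real.rpow_natCast, ← Real.rpow_mul (by positivity),
      ← Real.exp_nat_mul, show c / (1 / 2) = 2 * c by ring]
    ring_nf
  rw [← hmax]
  refine IsGreatest.csSup_eq ⟨⟨(1 / 2 / c) • T, hT.smul (by positivity), ?_⟩, ?_⟩
  · exact (hT.det_rpow_neg_mul_exp_neg_mul_trace_inv_mul_smul ha hc).symm
  · rintro x ⟨M, hM, rfl⟩
    exact hT.det_rpow_neg_mul_exp_neg_mul_trace_inv_mul_le hM ha hc
end
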